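/- Let v ≥ 1 be an integer and x > 0 a real number. If λ ∈ ℝ^v and b ∈ ℝ^v satisfy ∑_{j=1}^v J_{kj}(x)·λ_j = b_k for all k = 1,…,v, and ∑_{k=1}^v b_k = 0, then ∑_{k=1}^v λ_k = 0. -/

import Mathlib

open Real

/-- Chi-squared cumulative distribution function with `ν` degrees of freedom. -/
noncomputable def chiCDF (ν x : ℝ) : ℝ :=
  ((2 : ℝ) ^ (ν / 2) * Real.Gamma (ν / 2))⁻¹ *
    ∫ t in (0 : ℝ)..x, t ^ (ν / 2 - 1) * Real.exp (-t / 2)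

/-- The `v×v` matrix `J(x)` with entries
`J_{kj}(x) = (1/2)·[(1 + 2δ_{kj})·F_{v+4}(x)/F_v(x) − F_{v+2}(x)²/F_v(x)²]`. -/
noncomputable def Jmat (v : ℕ) (x : ℝ) : Matrix (Fin v) (Fin v) ℝ :=
  Matrix.of fun k j =>
    (1 / 2) * ((1 + 2 * (if k = j then (1 : ℝ) else 0)) * chiCDF (v + 4) x / chiCDF v x
      - (chiCDF (v + 2) x) ^ 2 / (chiCDF v x) ^ 2)

/-!
Every column of `J(x)` has the same sum
`D = ((v + 2) F_v F_{v+4} - v F_{v+2}²) / (2 F_v²)`, so summing `J(x) λ = b` over `k` gives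
`D · ∑ λ = ∑ b = 0`. Since `Γ(s + 1) = s Γ(s)`, the numerator of `D` is a positive multiple of
`M₀ M₂ - M₁²`, where `Mᵢ = ∫₀ˣ t ^ (v/2 - 1 + i) e^{-t/2} dt`, and this is positive by the
strict Cauchy–Schwarz inequality (a nondegenerate variance).
-/

open MeasureTheory Set Matrix

theorem Matrix.sum_mulVec_of_sum_col_eq {m n R : Type*} [Fintype m] [Fintype n]
    [NonUnitalNonAssocSemiring R] (A : Matrix m n R) (c : R) (hA : ∀ j, ∑ i, A i j = c)
    (x : n → R) : ∑ i, (A *ᵥ x) i = c * ∑ j, x j := by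
  simp only [mulVec, dotProduct]
  rw [Finset.sum_comm, Finset.mul_sum]
  simp only [← Finset.sum_mul, hA]

noncomputable def chiMoment (p x : ℝ) : ℝ := ∫ t in (0 : ℝ)..x, t ^ p * exp (-t / 2)

noncomputable def chiNorm (ν : ℝ) : ℝ := 2 ^ (ν / 2) * Gamma (ν / 2)

theorem chiCDF_eq_chiMoment (ν x : ℝ) : chiCDF ν x = (chiNorm ν)⁻¹ * chiMoment (ν / 2 - 1) x :=
  rfl

theorem chiNorm_pos {ν : ℝ} (hν : 0 < ν) : 0 < chiNorm ν :=
  mul_pos (rpow_pos_of_pos two_pos _) (Gamma_pos_of_pos (half_pos hν))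

theorem chiNorm_add_two {ν : ℝ} (hν : ν ≠ 0) : chiNorm (ν + 2) = ν * chiNorm ν := by
  rw [chiNorm, chiNorm, add_div, div_self two_ne_zero, rpow_add_one two_ne_zero,
    Gamma_add_one (div_ne_zero hν two_ne_zero)]
  ring

theorem intervalIntegrable_rpow_mul_exp {p : ℝ} (hp : -1 < p) (a b : ℝ) :
    IntervalIntegrable (fun t => t ^ p * exp (-t / 2)) volume a b :=
  (intervalIntegral.intervalIntegrable_rpow' hp).mul_continuousOn (by fun_prop)

theorem chiMoment_pos {p x : ℝ} (hp : -1 < p) (hx : 0 < x) : 0 < chiMoment p x :=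
  intervalIntegral.intervalIntegral_pos_of_pos_on (intervalIntegrable_rpow_mul_exp hp 0 x)
    (fun _ ht => mul_pos (rpow_pos_of_pos ht.1 p) (exp_pos _)) hx

theorem chiMoment_sq_lt {p x : ℝ} (hp : -1 < p) (hx : 0 < x) :
    chiMoment (p + 1) x ^ 2 < chiMoment p x * chiMoment (p + 2) x := by
  have hM := chiMoment_pos hp hx
  -- `m` is the mean of `t` under the weight `t ^ p e^{-t/2}` on `(0, x]`; its variance is positive.
  set m := chiMoment (p + 1) x / chiMoment p x
  have w₀ := intervalIntegrable_rpow_mul_exp hp 0 x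
  have w₁ := intervalIntegrable_rpow_mul_exp (p := p + 1) (by linarith) 0 x
  have w₂ := intervalIntegrable_rpow_mul_exp (p := p + 2) (by linarith) 0 x
  have expand : (∫ t in (0 : ℝ)..x, (t - m) ^ 2 * (t ^ p * exp (-t / 2))) =
      chiMoment (p + 2) x - 2 * m * chiMoment (p + 1) x + m ^ 2 * chiMoment p x := by
    rw [chiMoment, chiMoment, chiMoment, ← intervalIntegral.integral_const_mul,
      ← intervalIntegral.integral_const_mul, ← intervalIntegral.integral_sub w₂ (w₁.const_mul _),
      ← intervalIntegral.integral_add (w₂.sub (w₁.const_mul _)) (w₀.const_mul _)]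
    refine intervalIntegral.integral_congr fun t ht => ?_
    have ht : 0 ≤ t := by rw [uIcc_of_le hx.le] at ht; exact ht.1
    simp only [rpow_add' ht (by linarith : p + 1 ≠ 0), rpow_add' ht (by linarith : p + 2 ≠ 0),
      rpow_one, rpow_two]
    ring
  have hpos : 0 < ∫ t in (0 : ℝ)..x, (t - m) ^ 2 * (t ^ p * exp (-t / 2)) := by
    have hnonneg : 0 ≤ᵐ[volume.restrict (uIoc 0 x)]
        fun t => (t - m) ^ 2 * (t ^ p * exp (-t / 2)) := by
      rw [uIoc_of_le hx.le]
      filter_upwards [ae_restrict_mem measurableSet_Ioc] with t ht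
      have := ht.1
      positivity
    have hsupp : Ioc 0 x \ {m} ⊆
        Function.support (fun t => (t - m) ^ 2 * (t ^ p * exp (-t / 2))) ∩ Ioc 0 x :=
      fun t ht => ⟨(mul_pos (sq_pos_of_ne_zero (sub_ne_zero.mpr ht.2))
        (mul_pos (rpow_pos_of_pos ht.1.1 p) (exp_pos _))).ne', ht.1⟩
    rw [intervalIntegral.integral_pos_iff_support_of_nonneg_ae' hnonneg
      (w₀.continuousOn_mul (by fun_prop))]
    refine ⟨hx, ?_⟩
    calc 0 < volume (Ioc 0 x) := by simpa using hx
      _ = volume (Ioc 0 x \ {m}) := (measure_sdiff_null (measure_singleton m)).symm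
      _ ≤ _ := measure_mono hsupp
  have key : chiMoment p x * (chiMoment (p + 2) x - 2 * m * chiMoment (p + 1) x
      + m ^ 2 * chiMoment p x)
      = chiMoment p x * chiMoment (p + 2) x - chiMoment (p + 1) x ^ 2 := by
    simp only [m]
    field_simp
    ring
  linarith [mul_pos hM (expand ▸ hpos)]

theorem chiCDF_add_two (ν x : ℝ) (hν : ν ≠ 0) :
    chiCDF (ν + 2) x = (ν * chiNorm ν)⁻¹ * chiMoment (ν / 2) x := by
  rw [chiCDF_eq_chiMoment, chiNorm_add_two hν, add_div, div_self two_ne_zero, add_sub_cancel_right]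

theorem chiCDF_pos {ν x : ℝ} (hν : 0 < ν) (hx : 0 < x) : 0 < chiCDF ν x :=
  mul_pos (inv_pos.mpr (chiNorm_pos hν)) (chiMoment_pos (by linarith) hx)

theorem chiCDF_add_two_sq_lt {ν x : ℝ} (hν : 0 < ν) (hx : 0 < x) :
    ν * chiCDF (ν + 2) x ^ 2 < (ν + 2) * chiCDF ν x * chiCDF (ν + 4) x := by
  have hM := chiMoment_sq_lt (p := ν / 2 - 1) (by linarith) hx
  rw [sub_add_cancel, show ν / 2 - 1 + 2 = (ν + 2) / 2 by ring] at hM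
  have hN := chiNorm_pos hν
  rw [show ν + 4 = ν + 2 + 2 by ring, chiCDF_add_two (ν + 2) x (by linarith),
    chiCDF_add_two ν x hν.ne', chiNorm_add_two hν.ne', chiCDF_eq_chiMoment]
  calc ν * ((ν * chiNorm ν)⁻¹ * chiMoment (ν / 2) x) ^ 2
      = chiMoment (ν / 2) x ^ 2 / (ν * chiNorm ν ^ 2) := by field_simp
    _ < chiMoment (ν / 2 - 1) x * chiMoment ((ν + 2) / 2) x / (ν * chiNorm ν ^ 2) := by gcongr
    _ = _ := by field_simp

theorem half_mul_sq_chiCDF_div_lt {ν x : ℝ} (hν : 0 < ν) (hx : 0 < x) :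
    ν / 2 * (chiCDF (ν + 2) x / chiCDF ν x) ^ 2
      < (ν / 2 + 1) * (chiCDF (ν + 4) x / chiCDF ν x) := by
  have hF := chiCDF_add_two_sq_lt hν hx
  have hF₀ := chiCDF_pos hν hx
  rw [← sub_pos]
  have hdiff : (ν / 2 + 1) * (chiCDF (ν + 4) x / chiCDF ν x)
      - ν / 2 * (chiCDF (ν + 2) x / chiCDF ν x) ^ 2
      = ((ν + 2) * chiCDF ν x * chiCDF (ν + 4) x - ν * chiCDF (ν + 2) x ^ 2)
        / (2 * chiCDF ν x ^ 2) := by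
    field_simp
  rw [hdiff]
  exact div_pos (by linarith) (by positivity)

theorem sum_Jmat_apply (v : ℕ) (x : ℝ) (j : Fin v) :
    ∑ k, Jmat v x k j = (v / 2 + 1) * (chiCDF (v + 4) x / chiCDF v x)
      - v / 2 * (chiCDF (v + 2) x / chiCDF v x) ^ 2 := by
  set a := chiCDF (v + 4) x / chiCDF v x
  set c := (chiCDF (v + 2) x / chiCDF v x) ^ 2
  have hentry : ∀ k, Jmat v x k j = (a - c) / 2 + if k = j then a else 0 := by
    intro k
    simp only [Jmat, of_apply, a, c]
    split_ifs <;> ring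
  simp only [hentry, Finset.sum_add_distrib, Finset.sum_ite_eq', Finset.mem_univ, if_true,
    Finset.sum_const, Finset.card_univ, Fintype.card_fin, nsmul_eq_mul]
  ring

/-- If `J(x)·λ = b` and the entries of `b` sum to zero, then the entries of `λ`
sum to zero. -/
theorem sum_eq_zero_of_Jmat_mulVec (v : ℕ) (hv : 1 ≤ v) (x : ℝ) (hx : 0 < x)
    (lam b : Fin v → ℝ) (h : ∀ k, ∑ j : Fin v, Jmat v x k j * lam j = b k)
    (hb : ∑ k : Fin v, b k = 0) :
    ∑ k : Fin v, lam k = 0 := by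
  have hsum := (Jmat v x).sum_mulVec_of_sum_col_eq _ (sum_Jmat_apply v x) lam
  simp only [mulVec, dotProduct, h, hb] at hsum
  have hD := sub_pos.mpr (half_mul_sq_chiCDF_div_lt (Nat.cast_pos.mpr hv) hx)
  exact (mul_eq_zero.mp hsum.symm).resolve_left hD.ne'
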